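/- arXiv:2102.01925 — 4 statements merged into one kernel-verified Lean document; each statement's English description precedes it below -/
import Mathlib

section
/- Let τ > 1 and let Σ_YY = U_YY Λ_YY U_YY^T be an eigendecomposition of Σ_YY with orthonormal eigenvectors u_{YY,1}, …, u_{YY,m} and eigenvalues λ_{YY,1} ≥ … ≥ λ_{YY,m} > 0. Then for every k ∈ {1, …, m}, the vector a = ±√(2 λ_{YY,k} log τ) · u_{YY,k} satisfies P_ND(a') ≤ P_ND(a) for all a' ∈ ℝ^m; that is, these vectors maximize the probability of non-detection over all attack vectors. -/
open MeasureTheory Matrix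

/-- The complementary error function `erfc x = (2/√π) ∫_x^∞ e^{-t²} dt`. -/
noncomputable def erfc (x : ℝ) : ℝ :=
  (2 / Real.sqrt Real.pi) * ∫ t in Set.Ioi x, Real.exp (-t ^ 2)

/-- Density of the multivariate Gaussian `N(μ, S)` on `ℝ^m` (w.r.t. Lebesgue measure). -/
noncomputable def gaussPdf {m : ℕ} (μ : Fin m → ℝ) (S : Matrix (Fin m) (Fin m) ℝ)
    (y : Fin m → ℝ) : ℝ :=
  (Real.sqrt ((2 * Real.pi) ^ m * S.det))⁻¹ *
    Real.exp (-(1 / 2) * ((y - μ) ⬝ᵥ S⁻¹ *ᵥ (y - μ)))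

/-- Quadratic form `aᵀ S⁻¹ a`. -/
noncomputable def quadInv {m : ℕ} (S : Matrix (Fin m) (Fin m) ℝ) (a : Fin m → ℝ) : ℝ :=
  a ⬝ᵥ S⁻¹ *ᵥ a

/-- Likelihood ratio `L(y, a) = exp((1/2) aᵀ S⁻¹ a − aᵀ S⁻¹ y)`. -/
noncomputable def LRT {m : ℕ} (S : Matrix (Fin m) (Fin m) ℝ) (a y : Fin m → ℝ) : ℝ :=
  Real.exp ((1 / 2) * quadInv S a - a ⬝ᵥ S⁻¹ *ᵥ y)

/-- Probability of non-detection: `P[L(Y_a, a) > τ]` where `Y_a ~ N(a, S)`. -/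
noncomputable def PND {m : ℕ} (S : Matrix (Fin m) (Fin m) ℝ) (τ : ℝ) (a : Fin m → ℝ) : ℝ :=
  ∫ y in {y : Fin m → ℝ | LRT S a y > τ}, gaussPdf a S y

/-!
With `b = S⁻¹ a` and `q = aᵀ S⁻¹ a`, the detector accepts `y` iff `bᵀ y < q / 2 - log τ`. Under
`Y ~ N(a, S)` the statistic `bᵀ Y` is normal with mean `bᵀ a = q` and variance `bᵀ S b = q`, so
`P_ND(a) = Φ((-q / 2 - log τ) / √q)` depends on `a` only through `q`. By AM-GM the argument of `Φ`
is at most `-√(2 log τ)`, with equality at `q = 2 log τ`, which is the value of `q` at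
`±√(2 λ_k log τ) u_k`. The law of `bᵀ Y` is computed by whitening `S = A Aᵀ` and then rotating
`Aᵀ b` onto a coordinate axis, under which the standard Gaussian density is invariant.
-/

open ProbabilityTheory

noncomputable def stdNormalCDF (r : ℝ) : ℝ :=
  ∫ t in Set.Iio r, gaussianPDFReal 0 1 t

lemma stdNormalCDF_mono : Monotone stdNormalCDF := fun _ _ h =>
  setIntegral_mono_set (integrable_gaussianPDFReal 0 1).integrableOn
    (.of_forall fun t => gaussianPDFReal_nonneg 0 1 t) (Set.Iio_subset_Iio h).eventuallyLE

section StdGaussianPdf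

variable {ι : Type*} [Fintype ι]

noncomputable def stdGaussianPdf (z : ι → ℝ) : ℝ :=
  ∏ i, gaussianPDFReal 0 1 (z i)

lemma stdGaussianPdf_eq (z : ι → ℝ) :
    stdGaussianPdf z =
      (√((2 * Real.pi) ^ Fintype.card ι))⁻¹ * Real.exp (-(1 / 2) * (z ⬝ᵥ z)) := by
  rw [← Finset.card_univ, ← Finset.prod_const, Real.sqrt_prod _ fun _ _ => by positivity,
    ← Finset.prod_inv_distrib, dotProduct, Finset.mul_sum, Real.exp_sum, ← Finset.prod_mul_distrib]
  refine Finset.prod_congr rfl fun i _ => ?_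
  rw [gaussianPDFReal, NNReal.coe_one, mul_one, sub_zero]
  ring_nf

lemma integral_indicator_apply_lt_stdGaussianPdf [DecidableEq ι] (i₀ : ι) (r : ℝ) :
    ∫ z, {z : ι → ℝ | z i₀ < r}.indicator stdGaussianPdf z = stdNormalCDF r := by
  set φ := gaussianPDFReal 0 1
  have hsplit : {z : ι → ℝ | z i₀ < r}.indicator stdGaussianPdf =
      fun z => ∏ i, (if i = i₀ then (Set.Iio r).indicator φ else φ) (z i) := by
    ext z
    by_cases hz : z i₀ < r
    · rw [Set.indicator_of_mem (s := {z : ι → ℝ | z i₀ < r}) hz, stdGaussianPdf]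
      exact Finset.prod_congr rfl fun i _ => by
        split_ifs with h
        · subst h; exact (Set.indicator_of_mem (s := Set.Iio r) hz φ).symm
        · rfl
    · rw [Set.indicator_of_notMem (s := {z : ι → ℝ | z i₀ < r}) hz]
      exact (Finset.prod_eq_zero (Finset.mem_univ i₀) (by simp [hz])).symm
  rw [hsplit, integral_fintype_prod_volume_eq_prod,
    ← Finset.mul_prod_erase _ _ (Finset.mem_univ i₀), if_pos rfl,
    integral_indicator measurableSet_Iio,
    Finset.prod_congr rfl fun i hi => by
      rw [if_neg (Finset.ne_of_mem_erase hi), integral_gaussianPDFReal_eq_one 0 one_ne_zero]]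
  simp [stdNormalCDF, φ]

lemma EuclideanSpace.ofLp_dotProduct_ofLp (x y : EuclideanSpace ℝ ι) :
    x.ofLp ⬝ᵥ y.ofLp = inner ℝ x y := by
  rw [EuclideanSpace.inner_eq_star_dotProduct, dotProduct_comm]
  rfl

lemma stdGaussianPdf_ofLp_linearIsometryEquiv
    (f : EuclideanSpace ℝ ι ≃ₗᵢ[ℝ] EuclideanSpace ℝ ι) (x : EuclideanSpace ℝ ι) :
    stdGaussianPdf (f x).ofLp = stdGaussianPdf x.ofLp := by
  simp only [stdGaussianPdf_eq, EuclideanSpace.ofLp_dotProduct_ofLp, f.inner_map_map]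

lemma exists_orthonormalBasis_apply_eq {E : Type*} [NormedAddCommGroup E] [InnerProductSpace ℝ E]
    [FiniteDimensional ℝ E] (hE : Module.finrank ℝ E = Fintype.card ι) {v : E} (hv : ‖v‖ = 1)
    (i₀ : ι) : ∃ b : OrthonormalBasis ι ℝ E, b i₀ = v := by
  classical
  have hv' : Orthonormal ℝ (({i₀} : Set ι).domRestrict fun _ => v) :=
    orthonormal_iff_ite.mpr fun i j => by
      rw [if_pos (Subsingleton.elim i j)]
      simp [hv]
  obtain ⟨b, hb⟩ := hv'.exists_orthonormalBasis_extension_of_card_eq hE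
  exact ⟨b, hb i₀ rfl⟩

lemma integral_indicator_dotProduct_lt_stdGaussianPdf {w : ι → ℝ} (hw : w ≠ 0) (c : ℝ) :
    ∫ z, {z : ι → ℝ | w ⬝ᵥ z < c}.indicator stdGaussianPdf z = stdNormalCDF (c / √(w ⬝ᵥ w)) := by
  classical
  obtain ⟨i₀, -⟩ := Function.ne_iff.mp hw
  set W : EuclideanSpace ℝ ι := WithLp.toLp 2 w
  have hW : √(w ⬝ᵥ w) = ‖W‖ := by
    rw [norm_eq_sqrt_real_inner, ← EuclideanSpace.ofLp_dotProduct_ofLp]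
  have hW0 : W ≠ 0 := by simpa [W] using hw
  have hW0' : 0 < ‖W‖ := norm_pos_iff.mpr hW0
  obtain ⟨b, hb⟩ := exists_orthonormalBasis_apply_eq (E := EuclideanSpace ℝ ι)
    finrank_euclideanSpace (norm_smul_inv_norm (𝕜 := ℝ) hW0) i₀
  have hrepr (x : EuclideanSpace ℝ ι) : (b.repr x).ofLp i₀ = ‖W‖⁻¹ * (w ⬝ᵥ x.ofLp) := by
    rw [b.repr_apply_apply, hb, real_inner_smul_left, ← EuclideanSpace.ofLp_dotProduct_ofLp]
    rfl
  set G := {z : ι → ℝ | z i₀ < c / ‖W‖}.indicator stdGaussianPdf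
  rw [hW]
  calc ∫ z, {z : ι → ℝ | w ⬝ᵥ z < c}.indicator stdGaussianPdf z
      = ∫ x : EuclideanSpace ℝ ι, {z : ι → ℝ | w ⬝ᵥ z < c}.indicator stdGaussianPdf x.ofLp :=
        ((EuclideanSpace.volume_preserving_symm_measurableEquiv_toLp ι).integral_comp' _).symm
    _ = ∫ x : EuclideanSpace ℝ ι, G (b.repr x).ofLp := by
        congr 1 with x
        simp only [G, Set.indicator_apply, Set.mem_ofPred_eq,
          stdGaussianPdf_ofLp_linearIsometryEquiv, hrepr, lt_div_iff₀ hW0', mul_comm _ ‖W‖,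
          mul_inv_cancel_left₀ hW0'.ne']
    _ = ∫ y : EuclideanSpace ℝ ι, G y.ofLp :=
        b.measurePreserving_measurableEquiv.integral_comp' fun y => G y.ofLp
    _ = ∫ z, G z :=
        (EuclideanSpace.volume_preserving_symm_measurableEquiv_toLp ι).integral_comp' _
    _ = stdNormalCDF (c / ‖W‖) := integral_indicator_apply_lt_stdGaussianPdf i₀ _

end StdGaussianPdf

lemma integral_comp_mulVec {ι E : Type*} [Fintype ι] [DecidableEq ι] [NormedAddCommGroup E]
    [NormedSpace ℝ E] {A : Matrix ι ι ℝ} (hA : A.det ≠ 0) (f : (ι → ℝ) → E) :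
    ∫ z, f (A *ᵥ z) = |A.det|⁻¹ • ∫ x, f x := by
  have hinj : Function.Injective (toLin' A) :=
    mulVec_injective_iff_isUnit.mpr ((isUnit_iff_isUnit_det A).mpr hA.isUnit)
  have hemb : MeasurableEmbedding (toLin' A) :=
    (LinearMap.isClosedEmbedding_of_injective (LinearMap.ker_eq_bot.mpr hinj)).measurableEmbedding
  simp_rw [← toLin'_apply]
  rw [← hemb.integral_map, Real.map_matrix_volume_pi_eq_smul_volume_pi hA, integral_smul_measure,
    ENNReal.toReal_ofReal (abs_nonneg _), abs_inv]

lemma Matrix.PosDef.exists_eq_mul_transpose_self {ι : Type*} [Fintype ι] [DecidableEq ι]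
    {S : Matrix ι ι ℝ} (hS : S.PosDef) : ∃ A : Matrix ι ι ℝ, A.det ≠ 0 ∧ S = A * Aᵀ := by
  open scoped MatrixOrder in
  obtain ⟨B, rfl⟩ := CStarAlgebra.nonneg_iff_eq_star_mul_self.mp hS.posSemidef.nonneg
  refine ⟨Bᵀ, fun h => hS.det_pos.ne' ?_, by rw [transpose_transpose]; rfl⟩
  rw [star_eq_conjTranspose, conjTranspose_eq_transpose_of_trivial, det_mul, h, zero_mul]

lemma gaussPdf_zero_mul_transpose_mulVec {m : ℕ} {A : Matrix (Fin m) (Fin m) ℝ} (hA : A.det ≠ 0)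
    (z : Fin m → ℝ) : gaussPdf 0 (A * Aᵀ) (A *ᵥ z) = |A.det|⁻¹ * stdGaussianPdf z := by
  have hquad : A *ᵥ z ⬝ᵥ (A * Aᵀ)⁻¹ *ᵥ A *ᵥ z = z ⬝ᵥ z := by
    have hAu : IsUnit A.det := hA.isUnit
    have hAtu : IsUnit Aᵀ.det := by rwa [det_transpose]
    rw [Matrix.mul_inv_rev, mulVec_mulVec, Matrix.mul_assoc, nonsing_inv_mul A hAu, Matrix.mul_one,
      ← vecMul_transpose, ← dotProduct_mulVec, mulVec_mulVec, mul_nonsing_inv _ hAtu, one_mulVec]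
  have hdet : √((2 * Real.pi) ^ m * (A * Aᵀ).det) = √((2 * Real.pi) ^ m) * |A.det| := by
    rw [det_mul, det_transpose, Real.sqrt_mul (by positivity), ← sq, Real.sqrt_sq_eq_abs]
  rw [gaussPdf, sub_zero, hquad, hdet, mul_inv, stdGaussianPdf_eq, Fintype.card_fin]
  ring

lemma integral_indicator_dotProduct_lt_gaussPdf {m : ℕ} {S : Matrix (Fin m) (Fin m) ℝ}
    (hS : S.PosDef) {b : Fin m → ℝ} (hb : b ≠ 0) (c : ℝ) :
    ∫ x, {x | b ⬝ᵥ x < c}.indicator (gaussPdf 0 S) x = stdNormalCDF (c / √(b ⬝ᵥ S *ᵥ b)) := by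
  obtain ⟨A, hA, rfl⟩ := hS.exists_eq_mul_transpose_self
  have hA' : |A.det| ≠ 0 := abs_ne_zero.mpr hA
  set w := b ᵥ* A
  have hww : w ⬝ᵥ w = b ⬝ᵥ (A * Aᵀ) *ᵥ b := by
    rw [← mulVec_mulVec, dotProduct_mulVec, mulVec_transpose]
  have hw : w ≠ 0 := by
    rw [ne_eq, ← dotProduct_self_eq_zero, hww]
    simpa using (hS.dotProduct_mulVec_pos hb).ne'
  calc ∫ x, {x | b ⬝ᵥ x < c}.indicator (gaussPdf 0 (A * Aᵀ)) x
      = |A.det| * ∫ z, {x | b ⬝ᵥ x < c}.indicator (gaussPdf 0 (A * Aᵀ)) (A *ᵥ z) := by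
        rw [integral_comp_mulVec hA, smul_eq_mul, mul_inv_cancel_left₀ hA']
    _ = |A.det| * ∫ z, |A.det|⁻¹ * {z | w ⬝ᵥ z < c}.indicator stdGaussianPdf z := by
        simp only [Set.indicator_apply, Set.mem_ofPred_eq, dotProduct_mulVec, w,
          gaussPdf_zero_mul_transpose_mulVec hA, mul_ite, mul_zero]
    _ = stdNormalCDF (c / √(b ⬝ᵥ (A * Aᵀ) *ᵥ b)) := by
        rw [integral_const_mul, mul_inv_cancel_left₀ hA',
          integral_indicator_dotProduct_lt_stdGaussianPdf hw, hww]

section Detector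

variable {m : ℕ} (S : Matrix (Fin m) (Fin m) ℝ)

lemma gaussPdf_nonneg (μ y : Fin m → ℝ) : 0 ≤ gaussPdf μ S y := by
  unfold gaussPdf
  positivity

lemma PND_nonneg (τ : ℝ) (a : Fin m → ℝ) : 0 ≤ PND S τ a :=
  integral_nonneg (gaussPdf_nonneg S a)

lemma PND_zero {τ : ℝ} (hτ : 1 ≤ τ) : PND S τ 0 = 0 := by
  have : {y : Fin m → ℝ | LRT S 0 y > τ} = ∅ := by
    ext y
    simp [LRT, quadInv, hτ]
  rw [PND, this, setIntegral_empty]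

lemma setOf_LRT_gt_eq {τ : ℝ} (hτ : 0 < τ) (a : Fin m → ℝ) :
    {y | LRT S a y > τ} = {y | (a ᵥ* S⁻¹) ⬝ᵥ y < quadInv S a / 2 - Real.log τ} := by
  ext y
  rw [Set.mem_ofPred_eq, Set.mem_ofPred_eq, gt_iff_lt, LRT, ← Real.exp_log hτ, Real.exp_lt_exp,
    dotProduct_mulVec, Real.exp_log hτ]
  constructor <;> intro h <;> linarith

lemma PND_eq_stdNormalCDF (hS : S.PosDef) {τ : ℝ} (hτ : 0 < τ) {a : Fin m → ℝ} (ha : a ≠ 0) :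
    PND S τ a = stdNormalCDF ((-quadInv S a / 2 - Real.log τ) / √(quadInv S a)) := by
  set b := a ᵥ* S⁻¹
  have hbS : b ᵥ* S = a := by
    rw [vecMul_vecMul, nonsing_inv_mul S ((isUnit_iff_isUnit_det S).mp hS.isUnit), vecMul_one]
  have hb : b ≠ 0 := fun h => ha <| by rw [← hbS, h, zero_vecMul]
  have hba : b ⬝ᵥ a = quadInv S a := by rw [quadInv, dotProduct_mulVec]
  have hbSb : b ⬝ᵥ S *ᵥ b = quadInv S a := by rw [dotProduct_mulVec, hbS, dotProduct_comm, hba]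
  have hmeas : MeasurableSet {y : Fin m → ℝ | b ⬝ᵥ y < quadInv S a / 2 - Real.log τ} :=
    measurableSet_lt (by fun_prop) measurable_const
  have hhalf := integral_indicator_dotProduct_lt_gaussPdf hS hb (-quadInv S a / 2 - Real.log τ)
  rw [hbSb] at hhalf
  rw [PND, setOf_LRT_gt_eq S hτ, ← integral_indicator hmeas, ← integral_add_right_eq_self _ a,
    ← hhalf]
  congr 1 with x
  have hpdf : gaussPdf a S (x + a) = gaussPdf 0 S x := by simp [gaussPdf]
  simp only [Set.indicator_apply, Set.mem_ofPred_eq, dotProduct_add, hba, hpdf]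
  congr 1
  exact propext ⟨fun h => by linarith, fun h => by linarith⟩

end Detector

lemma neg_half_sub_div_sqrt_le {q L : ℝ} (hq : 0 < q) (hL : 0 ≤ L) :
    (-q / 2 - L) / √q ≤ -√(2 * L) := by
  rw [div_le_iff₀ (Real.sqrt_pos.mpr hq)]
  nlinarith [sq_nonneg (√q - √(2 * L)), Real.sq_sqrt hq.le,
    Real.sq_sqrt (by positivity : 0 ≤ 2 * L)]

lemma quadInv_smul_of_mulVec_eq_smul {m : ℕ} {S : Matrix (Fin m) (Fin m) ℝ} (hS : IsUnit S)
    {v : Fin m → ℝ} {μ : ℝ} (hv : S *ᵥ v = μ • v) (t : ℝ) :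
    quadInv S (t • v) = t ^ 2 / μ * (v ⬝ᵥ v) := by
  have hSv : S⁻¹ *ᵥ v = μ⁻¹ • v := by
    rcases eq_or_ne μ 0 with rfl | hμ
    · have hv0 : v = 0 := mulVec_injective_iff_isUnit.mpr hS (by rw [hv, zero_smul, mulVec_zero])
      rw [hv0, mulVec_zero, smul_zero]
    · rw [← inv_smul_smul₀ hμ (S⁻¹ *ᵥ v), ← mulVec_smul, ← hv, mulVec_mulVec,
        nonsing_inv_mul S ((isUnit_iff_isUnit_det S).mp hS), one_mulVec]
  rw [quadInv, mulVec_smul, hSv, smul_smul, smul_dotProduct, dotProduct_smul, smul_eq_mul,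
    smul_eq_mul]
  ring

theorem max_nondetection_attack_when_tau_gt_one_general
    {m n : ℕ} (H : Matrix (Fin m) (Fin n) ℝ) (Sxx : Matrix (Fin n) (Fin n) ℝ)
    (hXX : Sxx.PosDef) (σ : ℝ) (hσ : 0 < σ)
    (S : Matrix (Fin m) (Fin m) ℝ)
    (hS : S = H * Sxx * H.transpose + σ ^ 2 • (1 : Matrix (Fin m) (Fin m) ℝ))
    (τ : ℝ) (hτ : 1 < τ)
    -- eigendecomposition of Σ_YY: orthonormal eigenvectors with eigenvalues in descending order
    (u : Fin m → Fin m → ℝ) (lam : Fin m → ℝ)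
    (horth : ∀ i j, u i ⬝ᵥ u j = if i = j then (1 : ℝ) else 0)
    (heig : ∀ i, S *ᵥ u i = lam i • u i)
    (hpos : ∀ i, 0 < lam i) :
    ∀ k : Fin m, ∀ ε : ℝ, (ε = 1 ∨ ε = -1) →
      ∀ a' : Fin m → ℝ,
        PND S τ a' ≤ PND S τ (ε • Real.sqrt (lam k * (2 * Real.log τ)) • u k) := by
  intro k ε hε a'
  rw [smul_smul]
  have hSpd : S.PosDef := by
    rw [hS, ← conjTranspose_eq_transpose_of_trivial]
    exact PosDef.posSemidef_add (hXX.posSemidef.mul_mul_conjTranspose_same H)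
      (.smul .one (pow_pos hσ 2))
  have hL : 0 < Real.log τ := Real.log_pos hτ
  set a := (ε * √(lam k * (2 * Real.log τ))) • u k
  have hqa : quadInv S a = 2 * Real.log τ := by
    have hε2 : ε ^ 2 = 1 := by rcases hε with rfl | rfl <;> norm_num
    rw [quadInv_smul_of_mulVec_eq_smul hSpd.isUnit (heig k), horth, if_pos rfl, mul_pow,
      hε2, Real.sq_sqrt (by have := hpos k; positivity)]
    field_simp [(hpos k).ne']
  have ha : a ≠ 0 := fun h => by rw [h, quadInv, zero_dotProduct] at hqa; linarith
  have hPa : PND S τ a = stdNormalCDF (-√(2 * Real.log τ)) := by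
    rw [PND_eq_stdNormalCDF S hSpd (by linarith) ha, hqa]
    congr 1
    rw [show -(2 * Real.log τ) / 2 - Real.log τ = -(2 * Real.log τ) by ring, neg_div, Real.div_sqrt]
  rcases eq_or_ne a' 0 with rfl | ha'
  · exact (PND_zero S hτ.le).trans_le (PND_nonneg S τ a)
  · have hqa' : 0 < quadInv S a' := by simpa [quadInv] using hSpd.inv.dotProduct_mulVec_pos ha'
    rw [hPa, PND_eq_stdNormalCDF S hSpd (by linarith) ha']
    exact stdNormalCDF_mono (neg_half_sub_div_sqrt_le hqa' hL.le)

theorem max_nondetection_attack_when_tau_gt_one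
    {m n : ℕ} (H : Matrix (Fin m) (Fin n) ℝ) (Sxx : Matrix (Fin n) (Fin n) ℝ)
    (hXX : Sxx.PosDef) (σ : ℝ) (hσ : 0 < σ)
    (S : Matrix (Fin m) (Fin m) ℝ)
    (hS : S = H * Sxx * H.transpose + σ ^ 2 • (1 : Matrix (Fin m) (Fin m) ℝ))
    (τ : ℝ) (hτ : 1 < τ)
    -- eigendecomposition of Σ_YY: orthonormal eigenvectors with eigenvalues in descending order
    (u : Fin m → Fin m → ℝ) (lam : Fin m → ℝ)
    (horth : ∀ i j, u i ⬝ᵥ u j = if i = j then (1 : ℝ) else 0)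
    (heig : ∀ i, S *ᵥ u i = lam i • u i)
    (hdec : Antitone lam) (hpos : ∀ i, 0 < lam i) :
    ∀ k : Fin m, ∀ ε : ℝ, (ε = 1 ∨ ε = -1) →
      ∀ a' : Fin m → ℝ,
        PND S τ a' ≤ PND S τ (ε • Real.sqrt (lam k * (2 * Real.log τ)) • u k) :=
  max_nondetection_attack_when_tau_gt_one_general H Sxx hXX σ hσ S hS τ hτ u lam horth heig hpos
end

section
/- For every nonzero a ∈ ℝ^m, the probability that the likelihood-ratio detector does not detect the attack a equals P_ND(a) = (1/2)·erfc(((1/2) a^T Σ_YY^{-1} a + log τ)/√(2 a^T Σ_YY^{-1} a)); that is, if Y_a ~ N(a, Σ_YY), then P[exp((1/2) a^T Σ_YY^{-1} a − a^T Σ_YY^{-1} Y_a) > τ] equals this erfc expression. -/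
open MeasureTheory Matrix

/-!
Factor `S = A Aᵀ`. The affine substitution `y = A x + μ` turns the standard density on `ℝ^m`
into `gaussPdf μ S`, so `N(μ, S)` is the image of `m` independent standard normals and, by the
rotation invariance of the standard Gaussian, `y ↦ bᵀ y` is `N(bᵀ μ, bᵀ S b)`-distributed.
The detector declares no attack exactly when `(S⁻¹ a)ᵀ y < q / 2 - log τ`, where
`q = aᵀ S⁻¹ a`, and under `N(a, S)` this statistic is `N(q, q)`, whose distribution function is
an `erfc`.
-/

open ProbabilityTheory Set

lemma Matrix.PosSemidef.mul_mul_transpose_add_smul_one {m n : Type*} [Fintype m] [Fintype n]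
    [DecidableEq m] {Sxx : Matrix n n ℝ} (hXX : Sxx.PosSemidef) (H : Matrix m n ℝ) {σ : ℝ}
    (hσ : σ ≠ 0) : (H * Sxx * Hᵀ + σ ^ 2 • (1 : Matrix m m ℝ)).PosDef := by
  refine PosDef.posSemidef_add ?_ ?_
  · simpa using hXX.mul_mul_conjTranspose_same H
  · rw [smul_one_eq_diagonal]
    exact PosDef.diagonal fun _ => by positivity

open scoped MatrixOrder in
lemma Matrix.PosDef.exists_eq_mul_transpose {m : Type*} [Fintype m] [DecidableEq m]
    {S : Matrix m m ℝ} (hS : S.PosDef) : ∃ A : Matrix m m ℝ, A.det ≠ 0 ∧ S = A * Aᵀ := by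
  obtain ⟨B, rfl⟩ := CStarAlgebra.nonneg_iff_eq_star_mul_self.mp hS.posSemidef.nonneg
  refine ⟨Bᵀ, fun h => hS.det_pos.ne' ?_, by simp [star_eq_conjTranspose]⟩
  simp [star_eq_conjTranspose, det_mul, h]

lemma Matrix.mulVec_dotProduct_mul_transpose_inv_mulVec_mulVec {m : Type*} [Fintype m]
    [DecidableEq m] {A : Matrix m m ℝ} (hA : A.det ≠ 0) (x y : m → ℝ) :
    A *ᵥ x ⬝ᵥ (A * Aᵀ)⁻¹ *ᵥ A *ᵥ y = x ⬝ᵥ y := by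
  have hAt : IsUnit Aᵀ.det := by simpa using hA.isUnit
  have hid : Aᵀ * (A * Aᵀ)⁻¹ * A = 1 := by
    rw [mul_inv_rev, ← Matrix.mul_assoc, mul_nonsing_inv _ hAt, Matrix.one_mul,
      nonsing_inv_mul _ hA.isUnit]
  rw [← vecMul_transpose, ← dotProduct_mulVec, mulVec_mulVec, mulVec_mulVec, hid, one_mulVec]

lemma gaussPdf_zero_one {m : ℕ} (x : Fin m → ℝ) :
    gaussPdf 0 1 x = ∏ i, gaussianPDFReal 0 1 (x i) := by
  simp only [gaussPdf, gaussianPDFReal, Finset.prod_mul_distrib, ← Real.exp_sum,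
    Finset.prod_inv_distrib]
  congr 1
  · rw [← Real.sqrt_prod _ fun _ _ => by positivity]
    simp
  · simp only [inv_one, one_mulVec, dotProduct, Finset.mul_sum, sub_zero, NNReal.coe_one]
    exact congrArg Real.exp (Finset.sum_congr rfl fun i _ => by ring)

lemma gaussPdf_mulVec_add {m : ℕ} (μ : Fin m → ℝ) {A : Matrix (Fin m) (Fin m) ℝ}
    (hA : A.det ≠ 0) (x : Fin m → ℝ) :
    gaussPdf μ (A * Aᵀ) (A *ᵥ x + μ) = |A.det|⁻¹ * gaussPdf 0 1 x := by
  simp only [gaussPdf, add_sub_cancel_right, sub_zero,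
    mulVec_dotProduct_mul_transpose_inv_mulVec_mulVec hA, inv_one, one_mulVec, det_one, mul_one,
    det_mul, det_transpose]
  rw [Real.sqrt_mul (by positivity), Real.sqrt_mul_self_eq_abs]
  ring

lemma setIntegral_gaussPdf_eq_toReal {m : ℕ} (μ : Fin m → ℝ) (S : Matrix (Fin m) (Fin m) ℝ)
    (E : Set (Fin m → ℝ)) :
    ∫ y in E, gaussPdf μ S y =
      (volume.withDensity (fun y => ENNReal.ofReal (gaussPdf μ S y)) E).toReal := by
  rw [integral_eq_lintegral_of_nonneg_ae, withDensity_apply']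
  · exact ae_of_all _ fun y => by unfold gaussPdf; positivity
  · unfold gaussPdf; fun_prop

lemma pi_gaussianReal_eq_withDensity_gaussPdf {m : ℕ} :
    Measure.pi (fun _ : Fin m => gaussianReal 0 1) =
      volume.withDensity fun x => ENNReal.ofReal (gaussPdf 0 1 x) := by
  refine Measure.pi_eq fun s hs => ?_
  have hbox : (volume : Measure (Fin m → ℝ)).restrict (univ.pi s) =
      Measure.pi fun i => volume.restrict (s i) := by
    rw [volume_pi, Measure.restrict_pi_pi]
  rw [withDensity_apply _ (MeasurableSet.univ_pi hs), ← ofReal_integral_eq_lintegral_ofReal]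
  · simp_rw [gaussPdf_zero_one, hbox, integral_fintype_prod_eq_prod,
      gaussianReal_apply_eq_integral 0 one_ne_zero]
    exact ENNReal.ofReal_prod_of_nonneg fun i _ =>
      integral_nonneg fun x => gaussianPDFReal_nonneg 0 1 x
  · rw [hbox, funext gaussPdf_zero_one]
    exact Integrable.fintype_prod fun i => (integrable_gaussianPDFReal 0 1).restrict
  · exact ae_of_all _ fun x => by
      simpa [gaussPdf_zero_one] using Finset.prod_nonneg fun i _ => gaussianPDFReal_nonneg 0 1 (x i)

lemma withDensity_gaussPdf_mul_transpose_eq_map {m : ℕ} (μ : Fin m → ℝ)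
    {A : Matrix (Fin m) (Fin m) ℝ} (hA : A.det ≠ 0) :
    volume.withDensity (fun y => ENNReal.ofReal (gaussPdf μ (A * Aᵀ) y)) =
      (Measure.pi fun _ : Fin m => gaussianReal 0 1).map (fun x => A *ᵥ x + μ) := by
  set f : (Fin m → ℝ) → Fin m → ℝ := fun x => A *ᵥ x + μ
  have hf_deriv (x) : HasFDerivAt f (LinearMap.toContinuousLinearMap (toLin' A)) x :=
    (LinearMap.toContinuousLinearMap (toLin' A)).hasFDerivAt.add_const μ
  have hf_meas : Measurable f := by fun_prop
  have hf_surj : Function.Surjective f := fun y =>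
    (mulVec_surjective_iff_isUnit.mpr ((isUnit_iff_isUnit_det A).mpr hA.isUnit) (y - μ)).imp
      fun x hx => by simp [f, hx]
  have hf_inj : Function.Injective f := fun x y hxy =>
    mulVec_injective_of_det_ne_zero hA (add_right_cancel hxy)
  ext T hT
  rw [Measure.map_apply hf_meas hT, pi_gaussianReal_eq_withDensity_gaussPdf, withDensity_apply' _ T,
    withDensity_apply' _ (f ⁻¹' T), ← image_preimage_eq T hf_surj,
    lintegral_image_eq_lintegral_abs_det_fderiv_mul volume (hf_meas hT)
      (fun x _ => (hf_deriv x).hasFDerivWithinAt) hf_inj.injOn, preimage_image_eq _ hf_inj]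
  refine setLIntegral_congr_fun (hf_meas hT) fun x _ => ?_
  rw [gaussPdf_mulVec_add μ hA, ← ENNReal.ofReal_mul (abs_nonneg _), ContinuousLinearMap.det,
    LinearMap.coe_toContinuousLinearMap, LinearMap.det_toLin',
    mul_inv_cancel_left₀ (abs_ne_zero.mpr hA)]

lemma map_dotProduct_pi_gaussianReal {ι : Type*} [Fintype ι] (c : ι → ℝ) :
    (Measure.pi fun _ : ι => gaussianReal 0 1).map (c ⬝ᵥ ·) =
      gaussianReal 0 (c ⬝ᵥ c).toNNReal := by
  have hc : (c ⬝ᵥ ·) = innerSL ℝ (WithLp.toLp 2 c) ∘ WithLp.toLp 2 := by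
    ext x
    simp [EuclideanSpace.inner_eq_star_dotProduct, dotProduct_comm]
  rw [hc, ← Measure.map_map (by fun_prop) (by fun_prop), map_pi_eq_stdGaussian,
    IsGaussian.map_eq_gaussianReal, integral_strongDual_stdGaussian, variance_dual_stdGaussian,
    innerSL_apply_norm, EuclideanSpace.real_norm_sq_eq]
  simp [dotProduct, sq]

lemma map_dotProduct_withDensity_gaussPdf {m : ℕ} {S : Matrix (Fin m) (Fin m) ℝ} (hS : S.PosDef)
    (μ b : Fin m → ℝ) :
    (volume.withDensity fun y => ENNReal.ofReal (gaussPdf μ S y)).map (b ⬝ᵥ ·) =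
      gaussianReal (b ⬝ᵥ μ) (b ⬝ᵥ S *ᵥ b).toNNReal := by
  obtain ⟨A, hA, rfl⟩ := hS.exists_eq_mul_transpose
  have hcomp : (b ⬝ᵥ ·) ∘ (fun x => A *ᵥ x + μ) = (· + b ⬝ᵥ μ) ∘ (Aᵀ *ᵥ b ⬝ᵥ ·) := by
    ext x
    simp [dotProduct_add, dotProduct_mulVec, mulVec_transpose]
  rw [withDensity_gaussPdf_mul_transpose_eq_map μ hA, Measure.map_map (by fun_prop) (by fun_prop),
    hcomp, ← Measure.map_map (by fun_prop) (by fun_prop), map_dotProduct_pi_gaussianReal,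
    gaussianReal_map_add_const, zero_add, ← mulVec_mulVec, dotProduct_mulVec b A,
    ← mulVec_transpose]

lemma gaussianReal_zero_Iio_toReal {v : NNReal} (hv : v ≠ 0) (t : ℝ) :
    (gaussianReal 0 v (Iio t)).toReal = 1 / 2 * erfc (-t / √(2 * v)) := by
  have hs : 0 < √(2 * v) := Real.sqrt_pos.mpr (by positivity)
  have hpdf (x : ℝ) : gaussianPDFReal 0 v (-x) =
      (√Real.pi * √(2 * v))⁻¹ * Real.exp (-((√(2 * v))⁻¹ * x) ^ 2) := by
    rw [gaussianPDFReal, ← Real.sqrt_mul Real.pi_pos.le, mul_pow, inv_pow,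
      Real.sq_sqrt (by positivity)]
    ring_nf
  rw [gaussianReal_apply_eq_integral 0 hv, ENNReal.toReal_ofReal
    (setIntegral_nonneg measurableSet_Iio fun x _ => gaussianPDFReal_nonneg 0 v x),
    ← integral_Iic_eq_integral_Iio, ← neg_neg t, ← integral_comp_neg_Ioi]
  simp_rw [hpdf]
  rw [integral_const_mul,
    integral_comp_mul_left_Ioi (fun u => Real.exp (-u ^ 2)) _ (inv_pos.mpr hs), erfc, smul_eq_mul,
    inv_inv, inv_mul_eq_div, neg_neg]
  field_simp

lemma gaussianReal_Iio_toReal (μ : ℝ) {v : NNReal} (hv : v ≠ 0) (t : ℝ) :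
    (gaussianReal μ v (Iio t)).toReal = 1 / 2 * erfc ((μ - t) / √(2 * v)) := by
  rw [← zero_add μ, ← gaussianReal_map_add_const, Measure.map_apply (measurable_add_const μ)
    measurableSet_Iio, preimage_add_const_Iio, gaussianReal_zero_Iio_toReal hv, zero_add, neg_sub]

lemma setOf_LRT_gt_eq_preimage {m : ℕ} (S : Matrix (Fin m) (Fin m) ℝ) (a : Fin m → ℝ) {τ : ℝ}
    (hτ : 0 < τ) :
    {y | LRT S a y > τ} = (a ᵥ* S⁻¹ ⬝ᵥ ·) ⁻¹' Iio (quadInv S a / 2 - Real.log τ) := by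
  ext y
  simp only [mem_ofPred_eq, mem_preimage, mem_Iio, gt_iff_lt, LRT, ← Real.log_lt_iff_lt_exp hτ,
    ← dotProduct_mulVec]
  constructor <;> intro h <;> linarith

theorem probability_of_nondetection_erfc_formula
    {m n : ℕ} (H : Matrix (Fin m) (Fin n) ℝ) (Sxx : Matrix (Fin n) (Fin n) ℝ)
    (hXX : Sxx.PosDef) (σ : ℝ) (hσ : 0 < σ)
    (S : Matrix (Fin m) (Fin m) ℝ)
    (hS : S = H * Sxx * H.transpose + σ ^ 2 • (1 : Matrix (Fin m) (Fin m) ℝ))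
    (τ : ℝ) (hτ : 0 < τ) :
    ∀ a : Fin m → ℝ, a ≠ 0 →
      PND S τ a =
        (1 / 2) * erfc ((quadInv S a / 2 + Real.log τ) / Real.sqrt (2 * quadInv S a)) := by
  intro a ha
  have hS_pd : S.PosDef := hS ▸ hXX.posSemidef.mul_mul_transpose_add_smul_one H hσ.ne'
  set q := quadInv S a
  have hq : 0 < q := by simpa [q, quadInv] using hS_pd.inv.dotProduct_mulVec_pos ha
  have hmean : a ᵥ* S⁻¹ ⬝ᵥ a = q := (dotProduct_mulVec _ _ _).symm
  have hvar : a ᵥ* S⁻¹ ⬝ᵥ S *ᵥ (a ᵥ* S⁻¹) = q := by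
    rw [dotProduct_mulVec, vecMul_vecMul, nonsing_inv_mul _ hS_pd.det_pos.ne'.isUnit, vecMul_one,
      dotProduct_comm, hmean]
  calc PND S τ a
      = (volume.withDensity (fun y => ENNReal.ofReal (gaussPdf a S y))
          {y | LRT S a y > τ}).toReal := setIntegral_gaussPdf_eq_toReal a S _
    _ = (gaussianReal q q.toNNReal (Iio (q / 2 - Real.log τ))).toReal := by
        rw [setOf_LRT_gt_eq_preimage S a hτ, ← Measure.map_apply (by fun_prop) measurableSet_Iio,
          map_dotProduct_withDensity_gaussPdf hS_pd, hmean, hvar]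
    _ = 1 / 2 * erfc ((q / 2 + Real.log τ) / √(2 * q)) := by
        rw [gaussianReal_Iio_toReal _ (by simpa using hq), Real.coe_toNNReal _ hq.le,
          show q - (q / 2 - Real.log τ) = q / 2 + Real.log τ by ring]
end

section
/- Let G = Σ_YY^{-1/2} H Σ_XX² H^T Σ_YY^{-1/2} have eigendecomposition G = U_G Λ_G U_G^T with eigenvalues λ_{G,1} ≥ … ≥ λ_{G,m} ≥ 0 and orthonormal eigenvectors u_{G,1}, …, u_{G,m}. Let L_0 ∈ [0, ∞) with L_0² ≥ log τ. Then the attack vector maximizing the excess distortion a^T Σ_YY^{-1} H Σ_XX² H^T Σ_YY^{-1} a subject to the detection constraint ((1/2) a^T Σ_YY^{-1} a + log τ)/√(2 a^T Σ_YY^{-1} a) ≤ L_0 is a = ±(√2·L_0 + √(2 L_0² − 2 log τ)) · Σ_YY^{1/2} u_{G,1}, whenever a solution exists. -/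
open MeasureTheory Matrix

/-- Excess distortion `aᵀ Σ_YY⁻¹ H Σ_XX² Hᵀ Σ_YY⁻¹ a` induced on the MMSE estimate. -/
noncomputable def distortion {m n : ℕ} (S : Matrix (Fin m) (Fin m) ℝ)
    (H : Matrix (Fin m) (Fin n) ℝ) (Sxx : Matrix (Fin n) (Fin n) ℝ) (a : Fin m → ℝ) : ℝ :=
  a ⬝ᵥ (S⁻¹ * H * (Sxx * Sxx) * H.transpose * S⁻¹) *ᵥ a

/-!
Whitening by `R = Σ_YY^{1/2}` turns the problem into one about `w = R⁻¹ a`: the detection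
statistic depends only on `q = ‖w‖²`, and the distortion is the quadratic form `wᵀ G w`.
The detection constraint is a quadratic inequality in `√q` and so bounds `q` by `c²` with
`c = √2 L₀ + √(2 L₀² − 2 log τ)`, with equality of the constraint at `q = c²`; the Rayleigh bound
`wᵀ G w ≤ λ_{G,1} ‖w‖²` is attained along `u_{G,1}`.
-/

noncomputable def detectionRatio (ℓ q : ℝ) : ℝ :=
  (q / 2 + ℓ) / Real.sqrt (2 * q)

noncomputable def attackMagnitude (L ℓ : ℝ) : ℝ :=
  Real.sqrt 2 * L + Real.sqrt (2 * L ^ 2 - 2 * ℓ)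

section DetectionConstraint

variable {L ℓ : ℝ}

theorem le_attackMagnitude_sq_of_detectionRatio_le {q : ℝ} (hq : 0 ≤ q)
    (h : detectionRatio ℓ q ≤ L) : q ≤ attackMagnitude L ℓ ^ 2 := by
  rcases hq.eq_or_lt with rfl | hq
  · positivity
  set s := Real.sqrt q
  have hs : 0 < s := Real.sqrt_pos.mpr hq
  have hsq : s ^ 2 = q := Real.sq_sqrt hq.le
  have h2 : Real.sqrt 2 ^ 2 = 2 := Real.sq_sqrt zero_le_two
  have hlin : q / 2 + ℓ ≤ L * (Real.sqrt 2 * s) := by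
    rwa [detectionRatio, Real.sqrt_mul zero_le_two, div_le_iff₀ (by positivity)] at h
  -- completing the square in `s = √q`
  have hdev : |s - Real.sqrt 2 * L| ≤ Real.sqrt (2 * L ^ 2 - 2 * ℓ) :=
    Real.abs_le_sqrt (by nlinarith)
  have hsc : s ≤ attackMagnitude L ℓ := by
    unfold attackMagnitude; linarith [le_abs_self (s - Real.sqrt 2 * L)]
  rw [← hsq]
  exact pow_le_pow_left₀ hs.le hsc 2

theorem detectionRatio_attackMagnitude_sq_le (hL : 0 ≤ L) (hℓ : ℓ ≤ L ^ 2) :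
    detectionRatio ℓ (attackMagnitude L ℓ ^ 2) ≤ L := by
  have hd : Real.sqrt (2 * L ^ 2 - 2 * ℓ) ^ 2 = 2 * L ^ 2 - 2 * ℓ := Real.sq_sqrt (by linarith)
  have h2 : Real.sqrt 2 ^ 2 = 2 := Real.sq_sqrt zero_le_two
  have hc : 0 ≤ attackMagnitude L ℓ := by unfold attackMagnitude; positivity
  rcases hc.eq_or_lt with hc | hc
  · -- here `√(2 q) = 0`, and division by zero makes the ratio `0`
    simp [detectionRatio, ← hc, hL]
  rw [detectionRatio, Real.sqrt_mul zero_le_two, Real.sqrt_sq hc.le, div_le_iff₀ (by positivity)]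
  unfold attackMagnitude
  nlinarith

end DetectionConstraint

theorem posDef_mul_mul_transpose_add_smul_one {m n : Type*} [Fintype m] [Fintype n]
    [DecidableEq m] (H : Matrix m n ℝ) {Sxx : Matrix n n ℝ} (hXX : Sxx.PosSemidef) {σ : ℝ}
    (hσ : σ ≠ 0) : (H * Sxx * Hᵀ + σ ^ 2 • (1 : Matrix m m ℝ)).PosDef :=
  PosDef.posSemidef_add (conjTranspose_eq_transpose_of_trivial H ▸ hXX.mul_mul_conjTranspose_same H)
    (PosDef.one.smul (by positivity))

theorem dotProduct_mulVec_of_isSymm {ι : Type*} [Fintype ι] {A : Matrix ι ι ℝ} (hA : A.IsSymm)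
    (v w : ι → ℝ) : v ⬝ᵥ A *ᵥ w = (A *ᵥ v) ⬝ᵥ w := by
  rw [dotProduct_mulVec, ← hA.eq, vecMul_transpose, hA.eq]

section Whitening

variable {m : ℕ} {S R : Matrix (Fin m) (Fin m) ℝ}

theorem isUnit_det_of_mul_self_eq (hRR : R * R = S) (hS : S.PosDef) : IsUnit R.det := by
  refine isUnit_of_mul_isUnit_left (y := R.det) ?_
  rw [← det_mul, hRR, ← isUnit_iff_isUnit_det]
  exact hS.isUnit

theorem quadInv_eq_dotProduct_inv_mulVec (hR : R.IsSymm) (hRR : R * R = S) (b : Fin m → ℝ) :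
    quadInv S b = (R⁻¹ *ᵥ b) ⬝ᵥ (R⁻¹ *ᵥ b) := by
  rw [quadInv, ← hRR, Matrix.mul_inv_rev, ← mulVec_mulVec, dotProduct_mulVec_of_isSymm hR.inv]

theorem quadInv_nonneg (hR : R.IsSymm) (hRR : R * R = S) (b : Fin m → ℝ) : 0 ≤ quadInv S b := by
  rw [quadInv_eq_dotProduct_inv_mulVec hR hRR]
  exact dotProduct_self_star_nonneg _

theorem distortion_eq_dotProduct_inv_mulVec {n : ℕ} (hR : R.IsSymm) (hRR : R * R = S)
    (H : Matrix (Fin m) (Fin n) ℝ) (Sxx : Matrix (Fin n) (Fin n) ℝ) (b : Fin m → ℝ) :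
    distortion S H Sxx b =
      (R⁻¹ *ᵥ b) ⬝ᵥ (R⁻¹ * H * (Sxx * Sxx) * Hᵀ * R⁻¹) *ᵥ (R⁻¹ *ᵥ b) := by
  have hmat : S⁻¹ * H * (Sxx * Sxx) * Hᵀ * S⁻¹ =
      R⁻¹ * ((R⁻¹ * H * (Sxx * Sxx) * Hᵀ * R⁻¹) * R⁻¹) := by
    simp only [← hRR, Matrix.mul_inv_rev, Matrix.mul_assoc]
  rw [distortion, hmat, ← mulVec_mulVec, dotProduct_mulVec_of_isSymm hR.inv, mulVec_mulVec]

end Whitening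

section Spectral

variable {ι : Type*} [Fintype ι] [DecidableEq ι] {G : Matrix ι ι ℝ} {u : ι → ι → ℝ} {lam : ι → ℝ}

theorem transpose_mul_of_orthonormal (horth : ∀ i j, u i ⬝ᵥ u j = if i = j then 1 else 0) :
    (of u)ᵀ * of u = 1 := by
  refine mul_eq_one_comm.mp (ext fun i j => ?_)
  simpa [mul_apply, one_apply, dotProduct] using horth i j

theorem eq_transpose_mul_diagonal_mul_of_eigenvectors
    (horth : ∀ i j, u i ⬝ᵥ u j = if i = j then 1 else 0) (heig : ∀ i, G *ᵥ u i = lam i • u i) :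
    G = (of u)ᵀ * diagonal lam * of u := by
  have hGU : G * (of u)ᵀ = (of u)ᵀ * diagonal lam := by
    ext i j
    rw [mul_diagonal, mul_apply]
    simpa [mulVec, dotProduct, mul_comm] using congrFun (heig j) i
  rw [← hGU, Matrix.mul_assoc, transpose_mul_of_orthonormal horth, Matrix.mul_one]

theorem dotProduct_mulVec_le_of_eigenvectors
    (horth : ∀ i j, u i ⬝ᵥ u j = if i = j then 1 else 0) (heig : ∀ i, G *ᵥ u i = lam i • u i)
    {μ : ℝ} (hμ : ∀ i, lam i ≤ μ) (w : ι → ℝ) : w ⬝ᵥ G *ᵥ w ≤ μ * (w ⬝ᵥ w) := by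
  set v := of u *ᵥ w
  have hG : w ⬝ᵥ G *ᵥ w = v ⬝ᵥ diagonal lam *ᵥ v := by
    rw [eq_transpose_mul_diagonal_mul_of_eigenvectors horth heig, ← mulVec_mulVec,
      ← mulVec_mulVec, dotProduct_mulVec, vecMul_transpose]
  have hw : w ⬝ᵥ w = v ⬝ᵥ v := by
    rw [dotProduct_mulVec, ← mulVec_transpose, mulVec_mulVec, transpose_mul_of_orthonormal horth,
      one_mulVec]
  rw [hG, hw, dotProduct, dotProduct, Finset.mul_sum]
  refine Finset.sum_le_sum fun i _ => ?_
  rw [mulVec_diagonal]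
  nlinarith [hμ i, mul_self_nonneg (v i)]

end Spectral

theorem max_distortion_attack_with_detection_constraint_general
    {m n : ℕ} (hm : 0 < m) (H : Matrix (Fin m) (Fin n) ℝ) (Sxx : Matrix (Fin n) (Fin n) ℝ)
    (hXX : Sxx.PosDef) (σ : ℝ) (hσ : 0 < σ)
    (S : Matrix (Fin m) (Fin m) ℝ)
    (hS : S = H * Sxx * H.transpose + σ ^ 2 • (1 : Matrix (Fin m) (Fin m) ℝ))
    -- R = Σ_YY^{1/2}
    (R : Matrix (Fin m) (Fin m) ℝ) (hRpsd : R.PosSemidef) (hRR : R * R = S)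
    -- eigendecomposition of G = Σ_YY^{-1/2} H Σ_XX² Hᵀ Σ_YY^{-1/2}
    (G : Matrix (Fin m) (Fin m) ℝ)
    (hG : G = R⁻¹ * H * (Sxx * Sxx) * H.transpose * R⁻¹)
    (u : Fin m → Fin m → ℝ) (lam : Fin m → ℝ)
    (horth : ∀ i j, u i ⬝ᵥ u j = if i = j then (1 : ℝ) else 0)
    (heig : ∀ i, G *ᵥ u i = lam i • u i)
    (hdec : Antitone lam) (hnn : ∀ i, 0 ≤ lam i)
    (τ : ℝ)
    (L0 : ℝ) (hL0 : 0 ≤ L0) (hL0τ : Real.log τ ≤ L0 ^ 2) :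
    ∀ ε : ℝ, (ε = 1 ∨ ε = -1) →
      ∀ a : Fin m → ℝ,
        a = ε • (Real.sqrt 2 * L0 + Real.sqrt (2 * L0 ^ 2 - 2 * Real.log τ)) •
              R *ᵥ u ⟨0, hm⟩ →
        (quadInv S a / 2 + Real.log τ) / Real.sqrt (2 * quadInv S a) ≤ L0 ∧
        ∀ b : Fin m → ℝ,
          (quadInv S b / 2 + Real.log τ) / Real.sqrt (2 * quadInv S b) ≤ L0 →
          distortion S H Sxx b ≤ distortion S H Sxx a := by
  intro ε hε a ha
  change a = ε • attackMagnitude L0 (Real.log τ) • R *ᵥ u ⟨0, hm⟩ at ha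
  set i₀ : Fin m := ⟨0, hm⟩
  set c := attackMagnitude L0 (Real.log τ)
  have hR : R.IsSymm := isHermitian_iff_isSymm.mp hRpsd.isHermitian
  have hRdet : IsUnit R.det := isUnit_det_of_mul_self_eq hRR
    (hS ▸ posDef_mul_mul_transpose_add_smul_one H hXX.posSemidef hσ.ne')
  have hw : R⁻¹ *ᵥ a = (ε * c) • u i₀ := by
    rw [ha, mulVec_smul, mulVec_smul, mulVec_mulVec, nonsing_inv_mul R hRdet, one_mulVec, smul_smul]
  have hu : u i₀ ⬝ᵥ u i₀ = 1 := by simpa using horth i₀ i₀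
  have hεc : ε * c * (ε * c) = c ^ 2 := by rcases hε with rfl | rfl <;> ring
  have hqa : quadInv S a = c ^ 2 := by
    rw [quadInv_eq_dotProduct_inv_mulVec hR hRR, hw, smul_dotProduct, dotProduct_smul, hu,
      smul_eq_mul, smul_eq_mul, mul_one, hεc]
  have hda : distortion S H Sxx a = lam i₀ * c ^ 2 := by
    rw [distortion_eq_dotProduct_inv_mulVec hR hRR, ← hG, hw, mulVec_smul, heig, smul_dotProduct,
      dotProduct_smul, dotProduct_smul, hu, smul_eq_mul, smul_eq_mul, smul_eq_mul, ← hεc]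
    ring
  refine ⟨hqa ▸ detectionRatio_attackMagnitude_sq_le hL0 hL0τ, fun b hb => ?_⟩
  calc distortion S H Sxx b = (R⁻¹ *ᵥ b) ⬝ᵥ G *ᵥ (R⁻¹ *ᵥ b) := by
        rw [distortion_eq_dotProduct_inv_mulVec hR hRR, hG]
    _ ≤ lam i₀ * quadInv S b := by
        rw [quadInv_eq_dotProduct_inv_mulVec hR hRR]
        exact dotProduct_mulVec_le_of_eigenvectors horth heig (fun i => hdec (Nat.zero_le _)) _
    _ ≤ lam i₀ * c ^ 2 := mul_le_mul_of_nonneg_left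
        (le_attackMagnitude_sq_of_detectionRatio_le (quadInv_nonneg hR hRR b) hb) (hnn i₀)
    _ = distortion S H Sxx a := hda.symm

theorem max_distortion_attack_with_detection_constraint
    {m n : ℕ} (hm : 0 < m) (H : Matrix (Fin m) (Fin n) ℝ) (Sxx : Matrix (Fin n) (Fin n) ℝ)
    (hXX : Sxx.PosDef) (σ : ℝ) (hσ : 0 < σ)
    (S : Matrix (Fin m) (Fin m) ℝ)
    (hS : S = H * Sxx * H.transpose + σ ^ 2 • (1 : Matrix (Fin m) (Fin m) ℝ))
    -- R = Σ_YY^{1/2}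
    (R : Matrix (Fin m) (Fin m) ℝ) (hRpsd : R.PosSemidef) (hRR : R * R = S)
    -- eigendecomposition of G = Σ_YY^{-1/2} H Σ_XX² Hᵀ Σ_YY^{-1/2}
    (G : Matrix (Fin m) (Fin m) ℝ)
    (hG : G = R⁻¹ * H * (Sxx * Sxx) * H.transpose * R⁻¹)
    (u : Fin m → Fin m → ℝ) (lam : Fin m → ℝ)
    (horth : ∀ i j, u i ⬝ᵥ u j = if i = j then (1 : ℝ) else 0)
    (heig : ∀ i, G *ᵥ u i = lam i • u i)
    (hdec : Antitone lam) (hnn : ∀ i, 0 ≤ lam i)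
    (τ : ℝ) (hτ0 : 0 < τ)
    (L0 : ℝ) (hL0 : 0 ≤ L0) (hL0τ : Real.log τ ≤ L0 ^ 2)
    -- "whenever a solution exists": the constrained maximization admits a solution
    (hex : ∃ b : Fin m → ℝ,
      (quadInv S b / 2 + Real.log τ) / Real.sqrt (2 * quadInv S b) ≤ L0 ∧
      ∀ b' : Fin m → ℝ,
        (quadInv S b' / 2 + Real.log τ) / Real.sqrt (2 * quadInv S b') ≤ L0 →
        distortion S H Sxx b' ≤ distortion S H Sxx b) :
    ∀ ε : ℝ, (ε = 1 ∨ ε = -1) →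
      ∀ a : Fin m → ℝ,
        a = ε • (Real.sqrt 2 * L0 + Real.sqrt (2 * L0 ^ 2 - 2 * Real.log τ)) •
              R *ᵥ u ⟨0, hm⟩ →
        (quadInv S a / 2 + Real.log τ) / Real.sqrt (2 * quadInv S a) ≤ L0 ∧
        ∀ b : Fin m → ℝ,
          (quadInv S b / 2 + Real.log τ) / Real.sqrt (2 * quadInv S b) ≤ L0 →
          distortion S H Sxx b ≤ distortion S H Sxx a :=
  max_distortion_attack_with_detection_constraint_general hm H Sxx hXX σ hσ S hS R hRpsd hRR G hG u
    lam horth heig hdec hnn τ L0 hL0 hL0τ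
end

section
/- Let τ > 1 be the decision threshold of the likelihood-ratio test. For any t > 0, if λ ≥ max(λ*(t), 1), where λ*(t) is the unique positive solution in λ of the equation 2λ·log τ − (1/(2λ))·tr(Δ²) − 2·√(tr(Δ²)·t) − 2·‖Δ‖_∞·t = 0, then the probability of detection of the generalized stealth attack satisfies P_D(λ) ≤ e^{−t}. -/
/-!
The statistic `uᵀ Δ u = ∑ Δᵢ uᵢ²` is a weighted χ² variable. Its moment generating function is
`∏ (1 - 2 s Δᵢ)^(-1/2)`, and `-½ log (1 - 2x) ≤ x + x² / (1 - 2x)` turns the Chernoff bound into the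
Laurent–Massart inequality `P(∑ Δᵢ Uᵢ² ≥ tr Δ + 2 √(tr Δ² t) + 2 ‖Δ‖_∞ t) ≤ e^{-t}`. On the other
side, `log (1 + y) ≥ y - y² / 2` bounds the detection threshold `λ (2 log τ + log det (I + Δ / λ))`
below by `tr Δ + 2 λ log τ - tr Δ² / (2 λ)`, which increases with `λ` and, by the defining equation
of `λ*(t)`, exceeds the Laurent–Massart level once `λ ≥ λ*(t)`.
-/

open MeasureTheory Matrix ProbabilityTheory Real

lemma neg_log_one_sub_le {u : ℝ} (h0 : 0 ≤ u) (h1 : u < 1) :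
    -log (1 - u) ≤ u + u ^ 2 / (2 * (1 - u)) := by
  have h2u : 0 < 2 - u := by linarith
  have h1u : 0 < 1 - u := by linarith
  -- `x` is chosen so that `(1 + x) / (1 - x) = (1 - u)⁻¹`
  set x := u / (2 - u) with hx
  have hx1 : 1 + x = 2 / (2 - u) := by rw [hx]; field_simp; ring
  have hx2 : 1 - x = 2 * (1 - u) / (2 - u) := by rw [hx]; field_simp; ring
  have hx3 : 1 - x ^ 2 = 4 * (1 - u) / (2 - u) ^ 2 := by rw [hx]; field_simp; ring
  have h := log_div_le_sum_range_add (x := x) (by positivity)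
    (by rw [hx, div_lt_one h2u]; linarith) 1
  have hlog : log ((1 + x) / (1 - x)) = -log (1 - u) := by
    rw [hx1, hx2, ← log_inv]
    congr 1
    field_simp
  have hrhs : x + x ^ 3 / (1 - x ^ 2) = (u + u ^ 2 / (2 * (1 - u))) / 2 := by
    rw [hx3, hx]
    field_simp
    ring
  simp only [hlog, Finset.sum_range_one] at h
  norm_num at h
  linarith

lemma sub_sq_div_two_le_log_one_add {y : ℝ} (hy : 0 ≤ y) : y - y ^ 2 / 2 ≤ log (1 + y) := by
  refine le_trans ?_ (le_log_one_add_of_nonneg hy)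
  rw [le_div_iff₀ (by linarith)]
  nlinarith [pow_nonneg hy 3]

lemma inv_sqrt_one_sub_two_mul_le_exp {x : ℝ} (h0 : 0 ≤ x) (h1 : 2 * x < 1) :
    (√(1 - 2 * x))⁻¹ ≤ exp (x + x ^ 2 / (1 - 2 * x)) := by
  have h1x : 0 < 1 - 2 * x := by linarith
  rw [← log_le_iff_le_exp (by positivity), log_inv, log_sqrt h1x.le]
  have h := neg_log_one_sub_le (by positivity) h1
  have e : (2 * x) ^ 2 / (2 * (1 - 2 * x)) = 2 * (x ^ 2 / (1 - 2 * x)) := by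
    field_simp
  linarith

/- For `1 / 2 ≤ c` both sides are junk zeros: the integrand is not integrable and `√` of a
nonpositive number is `0`. -/
lemma integral_exp_mul_sq_gaussianReal (c : ℝ) :
    ∫ x, exp (c * x ^ 2) ∂gaussianReal 0 1 = (√(1 - 2 * c))⁻¹ := by
  have hpdf : ∀ x : ℝ, gaussianPDFReal 0 1 x • exp (c * x ^ 2)
      = (√(2 * π))⁻¹ * exp (-(1 / 2 - c) * x ^ 2) := by
    intro x
    simp only [gaussianPDFReal, NNReal.coe_one, mul_one, sub_zero, smul_eq_mul]
    rw [mul_assoc, ← exp_add]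
    congr 2
    ring
  simp_rw [integral_gaussianReal_eq_integral_smul one_ne_zero, hpdf, integral_const_mul,
    integral_gaussian]
  rw [← sqrt_inv, ← sqrt_inv, ← sqrt_mul (by positivity)]
  congr 1
  field_simp

lemma mgf_weighted_sum_sq_gaussian {ι : Type*} [Fintype ι] (D : ι → ℝ) (s : ℝ) :
    mgf (fun u : ι → ℝ => ∑ i, D i * u i ^ 2) (Measure.pi fun _ => gaussianReal 0 1) s
      = ∏ i, (√(1 - 2 * s * D i))⁻¹ := by
  have hexp : ∀ u : ι → ℝ, exp (s * ∑ i, D i * u i ^ 2) = ∏ i, exp (s * D i * u i ^ 2) := by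
    intro u
    rw [Finset.mul_sum, exp_sum]
    simp only [mul_assoc]
  simp only [mgf, hexp]
  rw [integral_fintype_prod_eq_prod (f := fun i x => exp (s * D i * x ^ 2))]
  simp_rw [integral_exp_mul_sq_gaussianReal, mul_assoc]

section WeightedChiSquared

variable {ι : Type*} [Fintype ι] {D : ι → ℝ} {b : ℝ}

lemma mgf_weighted_sum_sq_gaussian_le (hD : ∀ i, 0 ≤ D i) (hDb : ∀ i, D i ≤ b) {s : ℝ}
    (hs : 0 ≤ s) (hsb : 2 * s * b < 1) :
    mgf (fun u : ι → ℝ => ∑ i, D i * u i ^ 2) (Measure.pi fun _ => gaussianReal 0 1) s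
      ≤ exp (s * ∑ i, D i + s ^ 2 * (∑ i, D i ^ 2) / (1 - 2 * s * b)) := by
  have hexp : exp (s * ∑ i, D i + s ^ 2 * (∑ i, D i ^ 2) / (1 - 2 * s * b))
      = ∏ i, exp (s * D i + s ^ 2 * D i ^ 2 / (1 - 2 * s * b)) := by
    rw [← exp_sum, Finset.sum_add_distrib, Finset.mul_sum, Finset.mul_sum, Finset.sum_div]
  rw [mgf_weighted_sum_sq_gaussian, hexp]
  refine Finset.prod_le_prod (fun i _ => by positivity) fun i _ => ?_
  have hsD : 2 * (s * D i) ≤ 2 * s * b := by rw [← mul_assoc]; gcongr; exact hDb i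
  calc (√(1 - 2 * s * D i))⁻¹
      ≤ exp (s * D i + (s * D i) ^ 2 / (1 - 2 * (s * D i))) := by
        rw [mul_assoc]
        exact inv_sqrt_one_sub_two_mul_le_exp (by have := hD i; positivity) (hsD.trans_lt hsb)
    _ ≤ exp (s * D i + s ^ 2 * D i ^ 2 / (1 - 2 * s * b)) := by
        rw [mul_pow]
        gcongr

theorem measureReal_weighted_sum_sq_gaussian_ge_le (hD : ∀ i, 0 ≤ D i) (hDb : ∀ i, D i ≤ b)
    (hv : 0 < ∑ i, D i ^ 2) {t : ℝ} (ht : 0 ≤ t) :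
    (Measure.pi fun _ : ι => gaussianReal 0 1).real
        {u | ∑ i, D i + 2 * √((∑ i, D i ^ 2) * t) + 2 * b * t ≤ ∑ i, D i * u i ^ 2}
      ≤ exp (-t) := by
  set v := ∑ i, D i ^ 2
  obtain ⟨i₀, -, -⟩ := Finset.exists_ne_zero_of_sum_ne_zero hv.ne'
  have hb : 0 ≤ b := (hD i₀).trans (hDb i₀)
  have hsv : 0 < √v := sqrt_pos.2 hv
  have hden : 0 < √v + 2 * b * √t := by positivity
  -- `s` is chosen so that the Chernoff exponent in the final `calc` step equals `-t`
  have hsb : 1 - 2 * (√t / (√v + 2 * b * √t)) * b = √v / (√v + 2 * b * √t) := by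
    field_simp
    ring
  set s := √t / (√v + 2 * b * √t) with hs_def
  have hs : 0 ≤ s := by positivity
  have hsb' : 2 * s * b < 1 := by linarith [div_pos hsv hden]
  have hint : Integrable (fun u : ι → ℝ => exp (s * ∑ i, D i * u i ^ 2))
      (Measure.pi fun _ => gaussianReal 0 1) := by
    refine mgf_pos_iff.1 ?_
    rw [mgf_weighted_sum_sq_gaussian]
    refine Finset.prod_pos fun i _ => inv_pos.2 (sqrt_pos.2 ?_)
    have : 2 * s * D i ≤ 2 * s * b := by gcongr; exact hDb i
    linarith
  refine (measure_ge_le_exp_mul_mgf _ hs hint).trans ?_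
  calc _ ≤ exp (-s * (∑ i, D i + 2 * √(v * t) + 2 * b * t))
        * exp (s * ∑ i, D i + s ^ 2 * v / (1 - 2 * s * b)) := by
          gcongr
          exact mgf_weighted_sum_sq_gaussian_le hD hDb hs hsb'
    _ = exp (-t) := by
      rw [← exp_add, sqrt_mul hv.le, hsb]
      congr 1
      rw [hs_def]
      field_simp
      linear_combination (-√t ^ 2) * sq_sqrt hv.le + (-√v ^ 2) * sq_sqrt ht

end WeightedChiSquared

lemma sum_sub_sum_sq_div_le_mul_log_det {ι : Type*} [Fintype ι] [DecidableEq ι] {D : ι → ℝ}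
    (hD : ∀ i, 0 ≤ D i) {l : ℝ} (hl : 0 < l) :
    ∑ i, D i - (∑ i, D i ^ 2) / (2 * l) ≤ l * log (1 + l⁻¹ • diagonal D).det := by
  have hdiag : (1 + l⁻¹ • diagonal D) = diagonal fun i => 1 + D i / l := by
    ext i j
    rcases eq_or_ne i j with rfl | h <;> simp [*, div_eq_inv_mul]
  rw [hdiag, det_diagonal, log_prod fun i _ => by have := hD i; positivity, Finset.mul_sum,
    Finset.sum_div, ← Finset.sum_sub_distrib]
  refine Finset.sum_le_sum fun i _ => ?_
  calc D i - D i ^ 2 / (2 * l) = l * (D i / l - (D i / l) ^ 2 / 2) := by field_simp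
    _ ≤ l * log (1 + D i / l) := by
      gcongr
      exact sub_sq_div_two_le_log_one_add (div_nonneg (hD i) hl.le)

lemma le_detection_threshold {ι : Type*} [Fintype ι] [DecidableEq ι] {D : ι → ℝ}
    (hD : ∀ i, 0 ≤ D i) {c w l₀ l : ℝ} (hc : 0 ≤ c) (hl₀ : 0 < l₀) (hl : l₀ ≤ l)
    (hw : w ≤ 2 * l₀ * c - (∑ i, D i ^ 2) / (2 * l₀)) :
    ∑ i, D i + w ≤ l * (2 * c + log (1 + l⁻¹ • diagonal D).det) := by
  have hlog := sum_sub_sum_sq_div_le_mul_log_det hD (hl₀.trans_le hl)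
  have hsq : (∑ i, D i ^ 2) / (2 * l) ≤ (∑ i, D i ^ 2) / (2 * l₀) := by gcongr
  have hc' : l₀ * c ≤ l * c := by gcongr
  linear_combination hlog + hsq + 2 * hc' + hw

lemma Matrix.dotProduct_diagonal_mulVec_self {n R : Type*} [Fintype n] [DecidableEq n]
    [CommSemiring R] (d u : n → R) : u ⬝ᵥ diagonal d *ᵥ u = ∑ i, d i * u i ^ 2 := by
  simp only [dotProduct, mulVec_diagonal]
  exact Finset.sum_congr rfl fun i _ => by ring

lemma Matrix.PosSemidef.nonneg_of_eq_mul_diagonal_mul_transpose {n : Type*} [Fintype n]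
    [DecidableEq n] {M U : Matrix n n ℝ} {d : n → ℝ} (hM : M.PosSemidef) (hU : U * Uᵀ = 1)
    (h : M = U * diagonal d * Uᵀ) (i : n) : 0 ≤ d i := by
  have hdiag : diagonal d = Uᵀ * M * U := by
    rw [h, ← Matrix.mul_assoc, ← Matrix.mul_assoc, mul_eq_one_comm.1 hU, Matrix.one_mul,
      Matrix.mul_assoc, mul_eq_one_comm.1 hU, Matrix.mul_one]
  have hpsd : (diagonal d).PosSemidef := by
    rw [hdiag]
    simpa using hM.conjTranspose_mul_mul_same U
  exact posSemidef_diagonal_iff.1 hpsd i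

theorem detection_probability_upper_bound_general
    {m n : ℕ} (H : Matrix (Fin m) (Fin n) ℝ) (Sxx : Matrix (Fin n) (Fin n) ℝ)
    (hXX : Sxx.PosDef) (σ : ℝ)
    (Syy : Matrix (Fin m) (Fin m) ℝ)
    (hSyy : Syy = H * Sxx * H.transpose + σ ^ 2 • (1 : Matrix (Fin m) (Fin m) ℝ))
    (τ : ℝ) (hτ : 1 < τ)
    -- eigendecomposition of H Σ_XX Hᵀ, eigenvalues in descending order
    (Um : Matrix (Fin m) (Fin m) ℝ) (hUm : Um * Um.transpose = 1)
    (mu : Fin m → ℝ)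
    (hmu : H * Sxx * H.transpose = Um * Matrix.diagonal mu * Um.transpose)
    -- eigendecomposition of Σ_YY⁻¹, eigenvalues in descending order
    (Uy : Matrix (Fin m) (Fin m) ℝ) (hUy : Uy * Uy.transpose = 1)
    (nu : Fin m → ℝ)
    (hnu : Syy⁻¹ = Uy * Matrix.diagonal nu * Uy.transpose)
    -- p = rank(H Σ_XX Hᵀ) and Δ_{i,i} = λ_i(H Σ_XX Hᵀ) λ_i(Σ_YY⁻¹) ≤ 1
    (p : ℕ) (hpm : p ≤ m)
    (D : Fin p → ℝ) (hD : ∀ i, D i = mu (Fin.castLE hpm i) * nu (Fin.castLE hpm i))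
    -- the probability of detection of the generalized stealth attack of parameter λ
    (PD : ℝ → ℝ)
    (hPD : ∀ l : ℝ, PD l =
      ((Measure.pi fun _ : Fin p => gaussianReal 0 1)
        {u : Fin p → ℝ | u ⬝ᵥ (Matrix.diagonal D) *ᵥ u ≥
          l * (2 * Real.log τ +
            Real.log ((1 + l⁻¹ • Matrix.diagonal D).det))}).toReal)
    (t : ℝ) (ht : 0 < t)
    -- λ*(t): the unique positive solution of the threshold equation
    (lamStar : ℝ) (hlamStar_pos : 0 < lamStar)
    (hlamStar : 2 * lamStar * Real.log τ
        - (1 / (2 * lamStar)) * (Matrix.diagonal D * Matrix.diagonal D).trace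
        - 2 * Real.sqrt ((Matrix.diagonal D * Matrix.diagonal D).trace * t)
        - 2 * (⨆ i, D i) * t = 0) :
    ∀ lam : ℝ, max lamStar 1 ≤ lam → PD lam ≤ Real.exp (-t) := by
  intro lam hlam
  have hM : (H * Sxx * Hᵀ).PosSemidef := by
    simpa using hXX.posSemidef.mul_mul_conjTranspose_same H
  have hY : Syy⁻¹.PosSemidef := hSyy ▸ (hM.add (PosSemidef.one.smul (sq_nonneg σ))).inv
  have hD0 : ∀ i, 0 ≤ D i := fun i => hD i ▸ mul_nonneg
    (hM.nonneg_of_eq_mul_diagonal_mul_transpose hUm hmu _)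
    (hY.nonneg_of_eq_mul_diagonal_mul_transpose hUy hnu _)
  have hlogτ : 0 < log τ := log_pos hτ
  have htr : (diagonal D * diagonal D).trace = ∑ i, D i ^ 2 := by simp [sq]
  rw [htr] at hlamStar
  have hv : 0 < ∑ i, D i ^ 2 := by
    refine (Finset.sum_nonneg fun i _ => sq_nonneg (D i)).lt_of_ne fun hv => ?_
    have hzero : D = 0 := funext fun i => by
      simpa using (Finset.sum_eq_zero_iff_of_nonneg fun i _ => sq_nonneg (D i)).1 hv.symm i
        (Finset.mem_univ i)
    rw [← hv] at hlamStar
    simp only [hzero, Pi.zero_apply, iSup_const_zero, zero_mul, mul_zero, sqrt_zero,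
      sub_zero] at hlamStar
    exact (by positivity : (0 : ℝ) < 2 * lamStar * log τ).ne' hlamStar
  have hthreshold := le_detection_threshold hD0 hlogτ.le hlamStar_pos (le_of_max_le_left hlam)
    (w := 2 * √((∑ i, D i ^ 2) * t) + 2 * (⨆ i, D i) * t) (by linear_combination -hlamStar)
  rw [hPD]
  refine (measureReal_mono fun u hu => ?_).trans <|
    measureReal_weighted_sum_sq_gaussian_ge_le hD0
      (fun i => le_ciSup (Finite.bddAbove_range D) i) hv ht.le
  simp only [Set.mem_ofPred_eq, ge_iff_le, dotProduct_diagonal_mulVec_self] at hu ⊢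
  linarith

theorem detection_probability_upper_bound
    {m n : ℕ} (H : Matrix (Fin m) (Fin n) ℝ) (Sxx : Matrix (Fin n) (Fin n) ℝ)
    (hXX : Sxx.PosDef) (σ : ℝ) (hσ : 0 < σ)
    (Syy : Matrix (Fin m) (Fin m) ℝ)
    (hSyy : Syy = H * Sxx * H.transpose + σ ^ 2 • (1 : Matrix (Fin m) (Fin m) ℝ))
    (τ : ℝ) (hτ : 1 < τ)
    -- eigendecomposition of H Σ_XX Hᵀ, eigenvalues in descending order
    (Um : Matrix (Fin m) (Fin m) ℝ) (hUm : Um * Um.transpose = 1)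
    (mu : Fin m → ℝ) (hmu_dec : Antitone mu)
    (hmu : H * Sxx * H.transpose = Um * Matrix.diagonal mu * Um.transpose)
    -- eigendecomposition of Σ_YY⁻¹, eigenvalues in descending order
    (Uy : Matrix (Fin m) (Fin m) ℝ) (hUy : Uy * Uy.transpose = 1)
    (nu : Fin m → ℝ) (hnu_dec : Antitone nu)
    (hnu : Syy⁻¹ = Uy * Matrix.diagonal nu * Uy.transpose)
    -- p = rank(H Σ_XX Hᵀ) and Δ_{i,i} = λ_i(H Σ_XX Hᵀ) λ_i(Σ_YY⁻¹) ≤ 1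
    (p : ℕ) (hp : p = (H * Sxx * H.transpose).rank) (hpm : p ≤ m)
    (D : Fin p → ℝ) (hD : ∀ i, D i = mu (Fin.castLE hpm i) * nu (Fin.castLE hpm i))
    (hD1 : ∀ i, D i ≤ 1)
    -- the probability of detection of the generalized stealth attack of parameter λ
    (PD : ℝ → ℝ)
    (hPD : ∀ l : ℝ, PD l =
      ((Measure.pi fun _ : Fin p => gaussianReal 0 1)
        {u : Fin p → ℝ | u ⬝ᵥ (Matrix.diagonal D) *ᵥ u ≥
          l * (2 * Real.log τ +
            Real.log ((1 + l⁻¹ • Matrix.diagonal D).det))}).toReal)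
    (t : ℝ) (ht : 0 < t)
    -- λ*(t): the unique positive solution of the threshold equation
    (lamStar : ℝ) (hlamStar_pos : 0 < lamStar)
    (hlamStar : 2 * lamStar * Real.log τ
        - (1 / (2 * lamStar)) * (Matrix.diagonal D * Matrix.diagonal D).trace
        - 2 * Real.sqrt ((Matrix.diagonal D * Matrix.diagonal D).trace * t)
        - 2 * (⨆ i, D i) * t = 0)
    (hlamStar_uniq : ∀ x : ℝ, 0 < x →
      2 * x * Real.log τ
        - (1 / (2 * x)) * (Matrix.diagonal D * Matrix.diagonal D).trace
        - 2 * Real.sqrt ((Matrix.diagonal D * Matrix.diagonal D).trace * t)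
        - 2 * (⨆ i, D i) * t = 0 → x = lamStar) :
    ∀ lam : ℝ, max lamStar 1 ≤ lam → PD lam ≤ Real.exp (-t) :=
  detection_probability_upper_bound_general H Sxx hXX σ Syy hSyy τ hτ Um hUm mu hmu Uy hUy nu hnu p
    hpm D hD PD hPD t ht lamStar hlamStar_pos hlamStar
end
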